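/- arXiv:1506.07234 — 3 statements merged into one kernel-verified Lean document; each statement's English description precedes it below -/
import Mathlib

section
/- Let d_v ≥ 2 and let b = ⌊(d_v+1)/2⌋. Then for all γ ∈ [0,1], the tail sum ∑_{l=0}^{b-1} C(d_v - 1, l)·(1-γ)^l·γ^{d_v-1-l} is at most C(d_v - 1, b - 1)·γ^{⌈(d_v-1)/2⌉}. -/
/-- With `b = ⌊(d_v+1)/2⌋`, for all `γ ∈ [0,1]`,
`∑_{l=0}^{b-1} C(d_v-1,l)(1-γ)^l γ^{d_v-1-l} ≤ C(d_v-1,b-1) γ^{d_v-b}`,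
where `d_v - b = ⌈(d_v-1)/2⌉`. -/
theorem majority_tail_bound (d_v : ℕ) (hdv : 2 ≤ d_v)
    (γ : ℝ) (hγ : γ ∈ Set.Icc (0 : ℝ) 1) :
    ∑ l ∈ Finset.range ((d_v + 1) / 2),
        ((d_v - 1).choose l : ℝ) * (1 - γ) ^ l * γ ^ (d_v - 1 - l)
      ≤ ((d_v - 1).choose ((d_v + 1) / 2 - 1) : ℝ) * γ ^ (d_v - (d_v + 1) / 2) := by
  obtain ⟨hγ0, hγ1⟩ := hγ
  have h1γ : (0:ℝ) ≤ 1 - γ := by linarith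
  set n := d_v - 1 with hn
  set m := (d_v + 1) / 2 - 1 with hm
  have hb : (d_v + 1) / 2 = m + 1 := by omega
  have hdb : d_v - (m + 1) = n - m := by omega
  have hmn : m = n / 2 := by omega
  have hmn' : m ≤ n := by omega
  rw [hb, hdb]
  have key : ∀ l ∈ Finset.range (m+1),
      ((n.choose l : ℝ)) * (1-γ)^l * γ^(n-l)
        ≤ (n.choose m : ℝ) * γ^(n-m) * ((1-γ)^l * γ^(m-l) * (m.choose l : ℝ)) := by
    intro l hl
    have hlm : l ≤ m := Nat.lt_succ_iff.mp (Finset.mem_range.mp hl)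
    have hpow : γ^(n-l) = γ^(m-l) * γ^(n-m) := by
      rw [← pow_add]; congr 1; omega
    rw [hpow]
    have hc : (n.choose l : ℝ) ≤ (n.choose m : ℝ) := by
      exact_mod_cast hmn ▸ Nat.choose_le_middle l n
    have hc1 : (1:ℝ) ≤ (m.choose l : ℝ) := by
      exact_mod_cast Nat.succ_le_of_lt (Nat.choose_pos hlm)
    have p1 : (0:ℝ) ≤ (1-γ)^l := pow_nonneg h1γ l
    have p2 : (0:ℝ) ≤ γ^(m-l) := pow_nonneg hγ0 _
    have p3 : (0:ℝ) ≤ γ^(n-m) := pow_nonneg hγ0 _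
    have h0 : (0:ℝ) ≤ (n.choose l : ℝ) := Nat.cast_nonneg _
    have habc : (0:ℝ) ≤ (1-γ)^l * γ^(m-l) * γ^(n-m) :=
      mul_nonneg (mul_nonneg p1 p2) p3
    calc (n.choose l : ℝ) * (1-γ)^l * (γ^(m-l) * γ^(n-m))
        = (n.choose l : ℝ) * ((1-γ)^l * γ^(m-l) * γ^(n-m)) := by ring
      _ ≤ ((n.choose m : ℝ) * (m.choose l : ℝ)) * ((1-γ)^l * γ^(m-l) * γ^(n-m)) :=
          mul_le_mul_of_nonneg_right
            (hc.trans (le_mul_of_one_le_right (Nat.cast_nonneg _) hc1)) habc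
      _ = (n.choose m : ℝ) * γ^(n-m) * ((1-γ)^l * γ^(m-l) * (m.choose l : ℝ)) := by ring
  calc ∑ l ∈ Finset.range (m+1), ((n.choose l : ℝ)) * (1-γ)^l * γ^(n-l)
      ≤ ∑ l ∈ Finset.range (m+1),
          (n.choose m : ℝ) * γ^(n-m) * ((1-γ)^l * γ^(m-l) * (m.choose l : ℝ)) :=
        Finset.sum_le_sum key
    _ = (n.choose m : ℝ) * γ^(n-m) * ((1-γ) + γ)^m := by
        rw [← Finset.mul_sum, add_pow]
    _ = (n.choose m : ℝ) * γ^(n-m) := by norm_num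
end

section
/- Any noisy gate computing y = g(u_1,...,u_d) ⊕ z_g with d ≤ D and Pr(z_g = 1) = ε can be stochastically simulated by a gate of the form ỹ = g(u_1 ⊕ w_1, ..., u_d ⊕ w_d) ⊕ z̃_g where w_1,...,w_d are i.i.d. Bernoulli(ε/D) wire-noise variables independent of z̃_g, and Pr(z̃_g = 1) = ε' for some ε' ∈ [0, ε]; that is, the output distributions coincide. -/
/-!
With wire noise alone, the all-zero noise pattern has probability `(1 - ε/D)^d ≥ 1 - dε/D ≥ 1 - ε`,
so the gate `g(u ⊕ w)` outputs `g u` with probability `p ≥ 1 - ε > 1/2`. Flipping the output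
with probability `ε'` makes the probability of a correct output `ε' + p (1 - 2ε')`, an affine
function of `ε'` that equals `p ≥ 1 - ε` at `ε' = 0` and is `≤ 1 - ε` at `ε' = ε`; hence a
suitable `ε' ∈ [0, ε]` gives correctness probability exactly `1 - ε`.
-/

open Finset

section OutputFlip

variable {Ω : Type*} [Fintype Ω] {P : Ω → ℝ}

lemma sum_mul_ite_flip (hP : ∑ w, P w = 1) (G : Ω → Bool) (b : Bool) (ε' : ℝ) :
    ∑ w, P w * (if G w = b then 1 - ε' else ε')
      = ε' + (∑ w, if G w = b then P w else 0) * (1 - 2 * ε') := by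
  have hterm : ∀ w, P w * (if G w = b then 1 - ε' else ε')
      = P w * ε' + (if G w = b then P w else 0) * (1 - 2 * ε') := by
    intro w
    split_ifs <;> ring
  rw [Fintype.sum_congr _ _ hterm, sum_add_distrib, ← sum_mul, ← sum_mul, hP, one_mul]

lemma sum_ite_eq_not (hP : ∑ w, P w = 1) (G : Ω → Bool) (c : Bool) :
    ∑ w, (if G w = !c then P w else 0) = 1 - ∑ w, if G w = c then P w else 0 := by
  have hterm : ∀ w, (if G w = !c then P w else 0) = P w - if G w = c then P w else 0 := by
    intro w
    cases G w <;> cases c <;> simp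
  rw [Fintype.sum_congr _ _ hterm, sum_sub_distrib, hP]

lemma sum_ite_le_one (hP : ∑ w, P w = 1) (hP0 : ∀ w, 0 ≤ P w) (G : Ω → Bool) (c : Bool) :
    ∑ w, (if G w = c then P w else 0) ≤ 1 :=
  hP ▸ sum_le_sum fun w _ => by split_ifs <;> simp [hP0 w]

end OutputFlip

lemma exists_mem_Icc_add_mul_eq {p ε : ℝ} (hε : ε < 1 / 2) (hp : 1 - ε ≤ p) (hp1 : p ≤ 1) :
    ∃ ε' ∈ Set.Icc 0 ε, ε' + p * (1 - 2 * ε') = 1 - ε := by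
  have h2p : 0 < 2 * p - 1 := by linarith
  refine ⟨(p - (1 - ε)) / (2 * p - 1), ⟨by positivity, ?_⟩, ?_⟩
  · rw [div_le_iff₀ h2p]
    nlinarith
  · linear_combination -(div_mul_cancel₀ (p - (1 - ε)) h2p.ne')

theorem exists_output_flip_simulation {Ω : Type*} [Fintype Ω] {P : Ω → ℝ}
    (hP : ∑ w, P w = 1) (hP0 : ∀ w, 0 ≤ P w) (G : Ω → Bool) (c : Bool) {ε : ℝ}
    (hε : ε < 1 / 2) (hmass : 1 - ε ≤ ∑ w, if G w = c then P w else 0) :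
    ∃ ε' ∈ Set.Icc 0 ε, ∀ b : Bool,
      ∑ w, P w * (if G w = b then 1 - ε' else ε') = if c = b then 1 - ε else ε := by
  obtain ⟨ε', hε', hcorrect⟩ :=
    exists_mem_Icc_add_mul_eq hε hmass (sum_ite_le_one hP hP0 G c)
  refine ⟨ε', hε', fun b => ?_⟩
  rw [sum_mul_ite_flip hP]
  rcases Bool.eq_or_eq_not b c with rfl | rfl
  · rw [if_pos rfl, hcorrect]
  · rw [if_neg (by simp), sum_ite_eq_not hP]
    linear_combination -hcorrect

section BernoulliWeight

variable {ι : Type*} [Fintype ι]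

def bernoulliWeight (δ : ℝ) (w : ι → Bool) : ℝ :=
  ∏ i, if w i then δ else 1 - δ

lemma bernoulliWeight_nonneg {δ : ℝ} (h0 : 0 ≤ δ) (h1 : δ ≤ 1) (w : ι → Bool) :
    0 ≤ bernoulliWeight δ w :=
  prod_nonneg fun i _ => by split_ifs <;> linarith

lemma sum_bernoulliWeight [DecidableEq ι] (δ : ℝ) : ∑ w : ι → Bool, bernoulliWeight δ w = 1 := by
  simpa [bernoulliWeight] using (Fintype.prod_sum fun (_ : ι) (b : Bool) =>
    if b then δ else 1 - δ).symm

lemma bernoulliWeight_false (δ : ℝ) :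
    bernoulliWeight δ (fun _ : ι => false) = (1 - δ) ^ Fintype.card ι := by
  simp [bernoulliWeight]

lemma one_sub_card_mul_le_sum_ite [DecidableEq ι] {δ : ℝ} (h0 : 0 ≤ δ) (h1 : δ ≤ 1)
    (G : (ι → Bool) → Bool) (c : Bool) (hG : G (fun _ => false) = c) :
    1 - Fintype.card ι * δ ≤ ∑ w, if G w = c then bernoulliWeight δ w else 0 :=
  calc 1 - Fintype.card ι * δ ≤ (1 - δ) ^ Fintype.card ι := by
        simpa [sub_eq_add_neg] using one_add_mul_le_pow (a := -δ) (by linarith) (Fintype.card ι)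
    _ = if G (fun _ => false) = c then bernoulliWeight δ (fun _ => false) else 0 := by
        rw [if_pos hG, bernoulliWeight_false]
    _ ≤ ∑ w, if G w = c then bernoulliWeight δ w else 0 :=
        single_le_sum (f := fun w => if G w = c then bernoulliWeight δ w else 0)
          (fun w _ => by split_ifs <;> simp [bernoulliWeight_nonneg h0 h1 w]) (mem_univ _)

end BernoulliWeight

theorem noisy_gate_wire_simulation_general (D d : ℕ) (hdD : d ≤ D)
    (ε : ℝ) (hε0 : 0 ≤ ε) (hε : ε < 1 / 2)
    (g : (Fin d → Bool) → Bool) (u : Fin d → Bool) :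
    ∃ ε' ∈ Set.Icc (0 : ℝ) ε, ∀ b : Bool,
      (∑ w : Fin d → Bool,
          (∏ i, (if w i then ε / (D : ℝ) else 1 - ε / (D : ℝ)))
            * (if g (fun i => xor (u i) (w i)) = b then 1 - ε' else ε'))
        = (if g u = b then 1 - ε else ε) := by
  set δ := ε / (D : ℝ)
  have hδ0 : 0 ≤ δ := by positivity
  have hδ1 : δ ≤ 1 := by
    calc δ ≤ ε := mul_le_of_le_one_right hε0 (Nat.cast_inv_le_one D)
      _ ≤ 1 := by linarith
  have hdδ : (d : ℝ) * δ ≤ ε := by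
    calc (d : ℝ) * δ = (d / D : ℝ) * ε := by ring
      _ ≤ 1 * ε := by gcongr; exact div_le_one_of_le₀ (by exact_mod_cast hdD) (by positivity)
      _ = ε := one_mul ε
  have hmass := one_sub_card_mul_le_sum_ite hδ0 hδ1 (fun w => g fun i => xor (u i) (w i)) (g u)
    (by simp)
  rw [Fintype.card_fin] at hmass
  exact exists_output_flip_simulation (sum_bernoulliWeight δ) (bernoulliWeight_nonneg hδ0 hδ1)
    _ (g u) hε (by linarith)

/-- Noisy-gate / noisy-wire equivalence: a gate `y = g(u) ⊕ z_g` with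
`Pr(z_g = 1) = ε` is stochastically simulated by
`ỹ = g(u ⊕ w) ⊕ z̃_g` where the wire noises `wᵢ` are i.i.d. Bernoulli(ε/D)
independent of `z̃_g`, and `Pr(z̃_g = 1) = ε'` for some `ε' ∈ [0, ε]`:
the output distributions coincide for every input assignment `u`. -/
theorem noisy_gate_wire_simulation (D d : ℕ) (hd : 1 ≤ d) (hdD : d ≤ D) (hD : 3 < D)
    (ε : ℝ) (hε0 : 0 ≤ ε) (hε : ε < 1 / 2)
    (g : (Fin d → Bool) → Bool) (u : Fin d → Bool) :
    ∃ ε' ∈ Set.Icc (0 : ℝ) ε, ∀ b : Bool,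
      (∑ w : Fin d → Bool,
          (∏ i, (if w i then ε / (D : ℝ) else 1 - ε / (D : ℝ)))
            * (if g (fun i => xor (u i) (w i)) = b then 1 - ε' else ε'))
        = (if g u = b then 1 - ε else ε) :=
  noisy_gate_wire_simulation_general D d hdD ε hε0 hε g u
end

section
/- Let η̄(γ̄) := (1/2)·∑_{l=0}^{d_v-b-1} Λ_l(γ̄) + (1/2)·∑_{l=0}^{b-1} Λ_l(γ̄) where Λ_l(γ̄) = C(d_v-1, l)·(1-γ̄)^l·γ̄^{d_v-1-l} and b = ⌊(d_v+1)/2⌋. Then η̄(γ̄) ≤ ∑_{l=0}^{b-1} Λ_l(γ̄) ≤ C(d_v-1, b-1)·γ̄^{d_v - b} for all γ̄ ∈ [0,1]. -/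
/-- With `b = ⌊(d_v+1)/2⌋` and `Λ_l(γ) = C(d_v-1,l)(1-γ)^l γ^{d_v-1-l}`:
`η̄(γ) = (1/2)∑_{l<d_v-b} Λ_l + (1/2)∑_{l<b} Λ_l ≤ ∑_{l<b} Λ_l ≤ C(d_v-1,b-1) γ^{d_v-b}`
for all `γ ∈ [0,1]`. -/
theorem etaBar_upper_bound (d_v : ℕ) (hdv : 2 ≤ d_v)
    (γ : ℝ) (hγ : γ ∈ Set.Icc (0 : ℝ) 1) :
    (1 / 2) * (∑ l ∈ Finset.range (d_v - (d_v + 1) / 2),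
          ((d_v - 1).choose l : ℝ) * (1 - γ) ^ l * γ ^ (d_v - 1 - l))
      + (1 / 2) * (∑ l ∈ Finset.range ((d_v + 1) / 2),
          ((d_v - 1).choose l : ℝ) * (1 - γ) ^ l * γ ^ (d_v - 1 - l))
      ≤ ∑ l ∈ Finset.range ((d_v + 1) / 2),
          ((d_v - 1).choose l : ℝ) * (1 - γ) ^ l * γ ^ (d_v - 1 - l)
    ∧ ∑ l ∈ Finset.range ((d_v + 1) / 2),
          ((d_v - 1).choose l : ℝ) * (1 - γ) ^ l * γ ^ (d_v - 1 - l)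
        ≤ ((d_v - 1).choose ((d_v + 1) / 2 - 1) : ℝ)
            * γ ^ (d_v - (d_v + 1) / 2) := by
  obtain ⟨hγ0, hγ1⟩ := hγ
  have h1γ : (0:ℝ) ≤ 1 - γ := by linarith
  set b := (d_v + 1) / 2 with hb
  have hbd : d_v - b ≤ b := by omega
  have hb1 : 1 ≤ b := by omega
  constructor
  · have hAB : (∑ l ∈ Finset.range (d_v - b),
          ((d_v - 1).choose l : ℝ) * (1 - γ) ^ l * γ ^ (d_v - 1 - l))
        ≤ ∑ l ∈ Finset.range b,
          ((d_v - 1).choose l : ℝ) * (1 - γ) ^ l * γ ^ (d_v - 1 - l) := by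
      apply Finset.sum_le_sum_of_subset_of_nonneg
      · exact Finset.range_subset_range.mpr hbd
      · intro i _ _
        positivity
    linarith
  · have key : ∀ l ∈ Finset.range b,
        ((d_v - 1).choose l : ℝ) * (1 - γ) ^ l * γ ^ (d_v - 1 - l)
          ≤ ((d_v - 1).choose (b - 1) : ℝ) * γ ^ (d_v - b)
            * (((b - 1).choose l : ℝ) * (1 - γ) ^ l * γ ^ (b - 1 - l)) := by
      intro l hl
      rw [Finset.mem_range] at hl
      have hexp : d_v - 1 - l = (b - 1 - l) + (d_v - b) := by omega
      rw [hexp, pow_add]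
      have hch : ((d_v - 1).choose l : ℝ)
          ≤ ((d_v - 1).choose (b - 1) : ℝ) * ((b - 1).choose l : ℝ) := by
        have h1 : (d_v - 1).choose l ≤ (d_v - 1).choose ((d_v - 1) / 2) :=
          Nat.choose_le_middle l (d_v - 1)
        have h2 : (d_v - 1) / 2 = b - 1 := by omega
        have h3 : (1:ℝ) ≤ ((b - 1).choose l : ℝ) := by
          exact_mod_cast Nat.choose_pos (show l ≤ b - 1 by omega)
        calc ((d_v - 1).choose l : ℝ) ≤ ((d_v - 1).choose (b - 1) : ℝ) := by
              exact_mod_cast h2 ▸ h1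
          _ ≤ ((d_v - 1).choose (b - 1) : ℝ) * ((b - 1).choose l : ℝ) :=
              le_mul_of_one_le_right (by positivity) h3
      calc ((d_v - 1).choose l : ℝ) * (1 - γ) ^ l * (γ ^ (b - 1 - l) * γ ^ (d_v - b))
          ≤ (((d_v - 1).choose (b - 1) : ℝ) * ((b - 1).choose l : ℝ)) * (1 - γ) ^ l
              * (γ ^ (b - 1 - l) * γ ^ (d_v - b)) := by
            apply mul_le_mul_of_nonneg_right (mul_le_mul_of_nonneg_right hch (by positivity))
            positivity
        _ = ((d_v - 1).choose (b - 1) : ℝ) * γ ^ (d_v - b)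
            * (((b - 1).choose l : ℝ) * (1 - γ) ^ l * γ ^ (b - 1 - l)) := by ring
    have hsum1 : (∑ l ∈ Finset.range b,
        ((b - 1).choose l : ℝ) * (1 - γ) ^ l * γ ^ (b - 1 - l)) = 1 := by
      have := add_pow (1 - γ) γ (b - 1)
      have hrw : ((1 - γ) + γ) = (1:ℝ) := by ring
      rw [hrw, one_pow] at this
      have hbb : b - 1 + 1 = b := by omega
      rw [hbb] at this
      rw [show (∑ l ∈ Finset.range b,
          ((b - 1).choose l : ℝ) * (1 - γ) ^ l * γ ^ (b - 1 - l))
          = ∑ l ∈ Finset.range b, (1 - γ) ^ l * γ ^ (b - 1 - l) * ((b - 1).choose l : ℝ)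
        from Finset.sum_congr rfl fun l _ => by ring]
      exact this.symm
    calc (∑ l ∈ Finset.range b,
          ((d_v - 1).choose l : ℝ) * (1 - γ) ^ l * γ ^ (d_v - 1 - l))
        ≤ ∑ l ∈ Finset.range b, ((d_v - 1).choose (b - 1) : ℝ) * γ ^ (d_v - b)
            * (((b - 1).choose l : ℝ) * (1 - γ) ^ l * γ ^ (b - 1 - l)) :=
          Finset.sum_le_sum key
      _ = ((d_v - 1).choose (b - 1) : ℝ) * γ ^ (d_v - b)
            * ∑ l ∈ Finset.range b,
              (((b - 1).choose l : ℝ) * (1 - γ) ^ l * γ ^ (b - 1 - l)) := by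
          rw [Finset.mul_sum]
      _ = ((d_v - 1).choose (b - 1) : ℝ) * γ ^ (d_v - b) := by rw [hsum1, mul_one]
end
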